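/- Let A = (A^{(1)},…,A^{(R)}) and B = (B^{(1)},…,B^{(R)}) be families of mutually independent random vectors, where A^{(i)} and B^{(i)} take values in [−1,1]^{k_i}, and suppose that for every i ∈ [R] the ensembles A^{(i)} and B^{(i)} have matching moments up to degree 3. Let l = (l^{(1)},…,l^{(R)}) with l^{(i)} ∈ ℝ^{k_i}, and define the linear function l(x) = Σ_{i∈[R]} ⟨l^{(i)}, x^{(i)}⟩. Then for every K-bounded function Ψ : ℝ → ℝ and every θ ∈ ℝ, |E[Ψ(l(A) − θ)] − E[Ψ(l(B) − θ)]| ≤ K · Σ_{i∈[R]} ‖l^{(i)}‖₁⁴. -/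

import Mathlib

/-!
Lindeberg's replacement argument: the blocks `A⁽ⁱ⁾` are replaced by the blocks `B⁽ⁱ⁾` one at a
time. By independence, one swap compares the means of `Ψ (c + ⟨l⁽ⁱ⁾, v⟩)` under the two laws of
block `i`, with `c` collecting the other blocks. Expanding `Ψ` to third order at `c`, the Taylor
polynomials have the same mean because the moments of degree at most 3 agree, and the remainder
is at most `K/24 ⟨l⁽ⁱ⁾, v⟩⁴ ≤ K/24 ‖l⁽ⁱ⁾‖₁⁴` on the cube. Each swap therefore costs at most
`K/12 ‖l⁽ⁱ⁾‖₁⁴`.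
-/

open MeasureTheory Finset Function
open scoped Nat Interval

theorem abs_sub_le_of_abs_deriv_le {g : ℝ → ℝ} (hg : Differentiable ℝ g) {C : ℝ} {n : ℕ}
    (h : ∀ s, |deriv g s| ≤ C * |s| ^ n) (t : ℝ) :
    |g t - g 0| ≤ C * (|t| ^ (n + 1) / (n + 1)) := by
  have hbound : Continuous fun s : ℝ => C * |s| ^ n := by fun_prop
  have hint : IntervalIntegrable (deriv g) volume 0 t :=
    (hbound.intervalIntegrable 0 t).mono_fun (measurable_deriv g).aestronglyMeasurable
      (ae_of_all _ fun s => (h s).trans (le_abs_self _))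
  rw [← intervalIntegral.integral_deriv_eq_sub (fun s _ => hg s) hint, ← Real.norm_eq_abs,
    intervalIntegral.norm_integral_eq_norm_integral_uIoc]
  calc ‖∫ s in Ι 0 t, deriv g s‖ ≤ ∫ s in Ι 0 t, C * |s| ^ n :=
        norm_integral_le_of_norm_le hbound.integrableOn_uIoc (ae_of_all _ h)
    _ = C * (|t| ^ (n + 1) / (n + 1)) := by
        rw [integral_const_mul]
        simpa using congrArg (C * ·) (integral_pow_abs_sub_uIoc (a := 0) (b := t) (n := n))

-- The `n`-th derivative need not be continuous, so `taylor_mean_remainder_*` do not apply.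
theorem abs_sub_taylor_le (n : ℕ) {f : ℝ → ℝ} {M : ℝ}
    (hf : ∀ m < n, Differentiable ℝ (iteratedDeriv m f))
    (hM : ∀ t, |iteratedDeriv n f t| ≤ M) (c s : ℝ) :
    |f (c + s) - ∑ m ∈ range n, iteratedDeriv m f c / m ! * s ^ m| ≤ M * |s| ^ n / n ! := by
  induction n generalizing f s with
  | zero => simpa using hM (c + s)
  | succ n ih =>
    have hf₀ : Differentiable ℝ f := by simpa using hf 0 (by omega)
    have hf' : ∀ m < n, Differentiable ℝ (iteratedDeriv m (deriv f)) := fun m hm => by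
      simpa [iteratedDeriv_succ'] using hf (m + 1) (by omega)
    have hM' : ∀ t, |iteratedDeriv n (deriv f) t| ≤ M := by simpa [iteratedDeriv_succ'] using hM
    set g : ℝ → ℝ := fun s => f (c + s) - ∑ m ∈ range (n + 1), iteratedDeriv m f c / m ! * s ^ m
    have hg : ∀ s, HasDerivAt g
        (deriv f (c + s) - ∑ m ∈ range n, iteratedDeriv m (deriv f) c / m ! * s ^ m) s := by
      intro s
      have hpoly : HasDerivAt (fun s => ∑ m ∈ range (n + 1), iteratedDeriv m f c / m ! * s ^ m)
          (∑ m ∈ range (n + 1), iteratedDeriv m f c / m ! * (m * s ^ (m - 1))) s :=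
        HasDerivAt.fun_sum fun m _ => (hasDerivAt_pow m s).const_mul _
      have hcoef : ∑ m ∈ range (n + 1), iteratedDeriv m f c / m ! * (m * s ^ (m - 1)) =
          ∑ m ∈ range n, iteratedDeriv m (deriv f) c / m ! * s ^ m := by
        rw [sum_range_succ']
        simp only [iteratedDeriv_succ', Nat.factorial_succ, Nat.cast_zero, zero_mul, mul_zero,
          add_zero]
        refine sum_congr rfl fun m _ => ?_
        push_cast
        field_simp
      exact (((hf₀ (c + s)).hasDerivAt.comp_const_add c s).sub hpoly).congr_deriv (by rw [hcoef])
    have hg0 : g 0 = 0 := by simp [g, sum_range_succ']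
    have hg' : ∀ s, |deriv g s| ≤ M / n ! * |s| ^ n := fun s => by
      rw [(hg s).deriv, div_mul_eq_mul_div]
      exact ih hf' hM' s
    have hbound := abs_sub_le_of_abs_deriv_le (fun s => (hg s).differentiableAt) hg' s
    rw [hg0, sub_zero] at hbound
    refine hbound.trans_eq ?_
    rw [Nat.factorial_succ]
    push_cast
    field_simp

theorem Continuous.integrable_of_ae_norm_le {E : Type*} [NormedAddCommGroup E] [ProperSpace E]
    [MeasurableSpace E] [BorelSpace E] {μ : Measure E} [IsFiniteMeasure μ] {f : E → ℝ}
    (hf : Continuous f) {r : ℝ} (hμ : ∀ᵐ x ∂μ, ‖x‖ ≤ r) : Integrable f μ := by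
  obtain ⟨C, hC⟩ := (isCompact_closedBall (0 : E) r).exists_bound_of_continuousOn hf.continuousOn
  exact .of_bound hf.aestronglyMeasurable C <| hμ.mono fun x hx => hC x (by simpa using hx)

section Block

variable {ι : Type*} [Fintype ι]

theorem ae_norm_le_one_of_measure_cube_eq_one {μ : Measure (ι → ℝ)} [IsProbabilityMeasure μ]
    (h : μ {v | ∀ j, |v j| ≤ 1} = 1) : ∀ᵐ v ∂μ, ‖v‖ ≤ 1 := by
  have hcube : {v : ι → ℝ | ∀ j, |v j| ≤ 1} = {v | ‖v‖ ≤ 1} := by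
    ext v; simp [pi_norm_le_iff_of_nonneg zero_le_one, Real.norm_eq_abs]
  rw [hcube] at h
  rw [ae_iff_measure_eq (measurableSet_le (by fun_prop) (by fun_prop)).nullMeasurableSet, h,
    measure_univ]

theorem abs_sum_mul_le_of_norm_le_one (l : ι → ℝ) {v : ι → ℝ} (hv : ‖v‖ ≤ 1) :
    |∑ j, l j * v j| ≤ ∑ j, |l j| :=
  (abs_sum_le_sum_abs _ _).trans <| sum_le_sum fun j _ => by
    rw [abs_mul]
    exact mul_le_of_le_one_right (abs_nonneg _) ((norm_le_pi_norm v j).trans hv)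

theorem integral_sum_mul_pow_eq {μ ν : Measure (ι → ℝ)} [IsFiniteMeasure μ] [IsFiniteMeasure ν]
    (hμ : ∀ᵐ v ∂μ, ‖v‖ ≤ 1) (hν : ∀ᵐ v ∂ν, ‖v‖ ≤ 1) {d : ℕ}
    (hmom : ∀ S : Multiset ι, Multiset.card S ≤ d →
      ∫ v, (S.map v).prod ∂μ = ∫ v, (S.map v).prod ∂ν)
    (l : ι → ℝ) {m : ℕ} (hm : m ≤ d) :
    ∫ v, (∑ j, l j * v j) ^ m ∂μ = ∫ v, (∑ j, l j * v j) ^ m ∂ν := by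
  have expand : ∀ (ρ : Measure (ι → ℝ)) [IsFiniteMeasure ρ], (∀ᵐ v ∂ρ, ‖v‖ ≤ 1) →
      ∫ v, (∑ j, l j * v j) ^ m ∂ρ = ∑ p : Fin m → ι,
        (∏ i, l (p i)) * ∫ v, ((univ.val.map p).map v).prod ∂ρ := by
    intro ρ _ hρ
    simp only [Fintype.sum_pow, prod_mul_distrib]
    rw [integral_finsetSum _ fun p _ => (by fun_prop : Continuous _).integrable_of_ae_norm_le hρ]
    refine sum_congr rfl fun p _ => ?_
    rw [← integral_const_mul]
    simp only [Multiset.map_map]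
    rfl
  rw [expand μ hμ, expand ν hν]
  refine sum_congr rfl fun p _ => ?_
  rw [hmom _ (by simpa using hm)]

theorem abs_integral_comp_add_sum_mul_sub_le {μ ν : Measure (ι → ℝ)} [IsProbabilityMeasure μ]
    [IsProbabilityMeasure ν] (hμ : ∀ᵐ v ∂μ, ‖v‖ ≤ 1) (hν : ∀ᵐ v ∂ν, ‖v‖ ≤ 1)
    (hmom : ∀ S : Multiset ι, Multiset.card S ≤ 3 →
      ∫ v, (S.map v).prod ∂μ = ∫ v, (S.map v).prod ∂ν)
    (l : ι → ℝ) {Ψ : ℝ → ℝ} {K : ℝ} (hΨ : ∀ m < 4, Differentiable ℝ (iteratedDeriv m Ψ))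
    (hK : ∀ t, |iteratedDeriv 4 Ψ t| ≤ K) (c : ℝ) :
    |∫ v, Ψ (c + ∑ j, l j * v j) ∂μ - ∫ v, Ψ (c + ∑ j, l j * v j) ∂ν|
      ≤ K / 12 * (∑ j, |l j|) ^ 4 := by
  have hK0 : 0 ≤ K := (abs_nonneg _).trans (hK 0)
  have hΨc : Continuous Ψ := by simpa using (hΨ 0 (by norm_num)).continuous
  set L := ∑ j, |l j|
  set T : ℝ → ℝ := fun s => ∑ m ∈ range 4, iteratedDeriv m Ψ c / m ! * s ^ m
  have hT : ∫ v, T (∑ j, l j * v j) ∂μ = ∫ v, T (∑ j, l j * v j) ∂ν := by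
    have hint : ∀ (ρ : Measure (ι → ℝ)) [IsFiniteMeasure ρ], (∀ᵐ v ∂ρ, ‖v‖ ≤ 1) →
        ∀ m ∈ range 4, Integrable (fun v => iteratedDeriv m Ψ c / m ! * (∑ j, l j * v j) ^ m) ρ :=
      fun ρ _ hρ m _ => (by fun_prop : Continuous _).integrable_of_ae_norm_le hρ
    simp only [T]
    rw [integral_finsetSum _ (hint μ hμ), integral_finsetSum _ (hint ν hν)]
    refine sum_congr rfl fun m hm => ?_
    rw [integral_const_mul, integral_const_mul,
      integral_sum_mul_pow_eq hμ hν hmom l (Nat.lt_succ_iff.mp (mem_range.mp hm))]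
  have hrem : ∀ (ρ : Measure (ι → ℝ)) [IsProbabilityMeasure ρ], (∀ᵐ v ∂ρ, ‖v‖ ≤ 1) →
      |∫ v, (Ψ (c + ∑ j, l j * v j) - T (∑ j, l j * v j)) ∂ρ| ≤ K / 24 * L ^ 4 := by
    intro ρ _ hρ
    suffices h : ∀ᵐ v ∂ρ, ‖Ψ (c + ∑ j, l j * v j) - T (∑ j, l j * v j)‖ ≤ K / 24 * L ^ 4 by
      simpa using norm_integral_le_of_norm_le_const h
    filter_upwards [hρ] with v hv
    calc ‖Ψ (c + ∑ j, l j * v j) - T (∑ j, l j * v j)‖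
        ≤ K * |∑ j, l j * v j| ^ 4 / 4 ! := abs_sub_taylor_le 4 hΨ hK c _
      _ ≤ K * L ^ 4 / 4 ! := by gcongr; exact abs_sum_mul_le_of_norm_le_one l hv
      _ = K / 24 * L ^ 4 := by norm_num [Nat.factorial]; ring
  have hsplit : ∀ (ρ : Measure (ι → ℝ)) [IsProbabilityMeasure ρ], (∀ᵐ v ∂ρ, ‖v‖ ≤ 1) →
      ∫ v, Ψ (c + ∑ j, l j * v j) ∂ρ = ∫ v, (Ψ (c + ∑ j, l j * v j) - T (∑ j, l j * v j)) ∂ρ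
        + ∫ v, T (∑ j, l j * v j) ∂ρ := by
    intro ρ _ hρ
    rw [integral_sub ((by fun_prop : Continuous _).integrable_of_ae_norm_le hρ)
      ((by fun_prop : Continuous _).integrable_of_ae_norm_le hρ), sub_add_cancel]
  rw [hsplit μ hμ, hsplit ν hν, hT, add_sub_add_right_eq_sub]
  calc _ ≤ K / 24 * L ^ 4 + K / 24 * L ^ 4 :=
        (abs_sub _ _).trans (add_le_add (hrem μ hμ) (hrem ν hν))
    _ = K / 12 * L ^ 4 := by ring

end Block

instance isProbabilityMeasure_update {ι : Type*} [DecidableEq ι] {α : ι → Type*}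
    [∀ i, MeasurableSpace (α i)] (m : ∀ i, Measure (α i)) [∀ i, IsProbabilityMeasure (m i)]
    (i : ι) (μ : Measure (α i)) [IsProbabilityMeasure μ] (j : ι) :
    IsProbabilityMeasure (update m i μ j) := by
  rcases eq_or_ne j i with rfl | hj
  · rwa [update_self]
  · rw [update_of_ne hj]
    infer_instance

theorem ae_norm_le_pi {ι : Type*} [Fintype ι] {E : ι → Type*}
    [∀ i, SeminormedAddCommGroup (E i)] [∀ i, MeasurableSpace (E i)] {μ : ∀ i, Measure (E i)}
    [∀ i, SigmaFinite (μ i)] {r : ℝ} (hr : 0 ≤ r) (hμ : ∀ i, ∀ᵐ v ∂μ i, ‖v‖ ≤ r) :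
    ∀ᵐ x ∂Measure.pi μ, ‖x‖ ≤ r := by
  have : ∀ᵐ x ∂Measure.pi μ, ∀ i, ‖x i‖ ≤ r :=
    ae_all_iff.2 fun i => Measure.tendsto_eval_ae_ae.eventually (hμ i)
  exact this.mono fun x hx => (pi_norm_le_iff_of_nonneg hr).2 hx

section Pi

variable {n : ℕ} {α : Fin (n + 1) → Type*} [∀ i, MeasurableSpace (α i)]

theorem integrable_comp_insertNth (μ : ∀ i, Measure (α i)) [∀ i, SigmaFinite (μ i)]
    (i : Fin (n + 1)) {f : (∀ j, α j) → ℝ} (hf : Integrable f (Measure.pi μ)) :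
    Integrable (fun p : α i × ∀ j, α (i.succAbove j) => f (i.insertNth p.1 p.2))
      ((μ i).prod (Measure.pi fun j => μ (i.succAbove j))) :=
  ((measurePreserving_piFinSuccAbove μ i).symm _).integrable_comp_of_integrable hf

theorem integral_pi_eq_integral_integral_insertNth (μ : ∀ i, Measure (α i))
    [∀ i, SigmaFinite (μ i)] (i : Fin (n + 1)) {f : (∀ j, α j) → ℝ}
    (hf : Integrable f (Measure.pi μ)) :
    ∫ x, f x ∂Measure.pi μ =
      ∫ y, ∫ v, f (i.insertNth v y) ∂μ i ∂Measure.pi fun j => μ (i.succAbove j) := by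
  rw [← ((measurePreserving_piFinSuccAbove μ i).symm _).integral_comp',
    ← integral_prod_symm _ (integrable_comp_insertNth μ i hf)]
  rfl

theorem abs_integral_pi_update_sub_le (m : ∀ i, Measure (α i)) [∀ i, IsProbabilityMeasure (m i)]
    (i : Fin (n + 1)) (μ ν : Measure (α i)) [IsProbabilityMeasure μ] [IsProbabilityMeasure ν]
    {f : (∀ j, α j) → ℝ} (hfμ : Integrable f (Measure.pi (update m i μ)))
    (hfν : Integrable f (Measure.pi (update m i ν))) {C : ℝ}
    (hC : ∀ y, |∫ v, f (i.insertNth v y) ∂μ - ∫ v, f (i.insertNth v y) ∂ν| ≤ C) :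
    |∫ x, f x ∂Measure.pi (update m i μ) - ∫ x, f x ∂Measure.pi (update m i ν)| ≤ C := by
  have hupdate : ∀ ρ : Measure (α i), (fun j => update m i ρ (i.succAbove j)) =
      fun j => m (i.succAbove j) := fun ρ => funext fun j => update_of_ne (i.succAbove_ne j) _ _
  have hμ := (integrable_comp_insertNth _ i hfμ).integral_prod_right
  have hν := (integrable_comp_insertNth _ i hfν).integral_prod_right
  rw [integral_pi_eq_integral_integral_insertNth _ i hfμ,
    integral_pi_eq_integral_integral_insertNth _ i hfν]
  simp only [hupdate, update_self] at hμ hν ⊢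
  rw [← integral_sub hμ hν]
  simpa using norm_integral_le_of_norm_le_const (μ := Measure.pi fun j => m (i.succAbove j))
    (ae_of_all _ fun y => (Real.norm_eq_abs _).trans_le (hC y))

end Pi

theorem abs_integral_pi_update_sub_le_of_moments {R : ℕ} {ι : Fin R → Type*}
    [∀ i, Fintype (ι i)] (m : ∀ i, Measure (ι i → ℝ)) [∀ i, IsProbabilityMeasure (m i)]
    (hm : ∀ i, ∀ᵐ v ∂m i, ‖v‖ ≤ 1) (i : Fin R) {μ ν : Measure (ι i → ℝ)}
    [IsProbabilityMeasure μ] [IsProbabilityMeasure ν] (hμ : ∀ᵐ v ∂μ, ‖v‖ ≤ 1)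
    (hν : ∀ᵐ v ∂ν, ‖v‖ ≤ 1)
    (hmom : ∀ S : Multiset (ι i), Multiset.card S ≤ 3 →
      ∫ v, (S.map v).prod ∂μ = ∫ v, (S.map v).prod ∂ν)
    (l : ∀ i, ι i → ℝ) {Ψ : ℝ → ℝ} {K : ℝ} (hΨ : ∀ m < 4, Differentiable ℝ (iteratedDeriv m Ψ))
    (hK : ∀ t, |iteratedDeriv 4 Ψ t| ≤ K) (θ : ℝ) :
    |∫ x, Ψ ((∑ i, ∑ j, l i j * x i j) - θ) ∂Measure.pi (update m i μ) -
        ∫ x, Ψ ((∑ i, ∑ j, l i j * x i j) - θ) ∂Measure.pi (update m i ν)|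
      ≤ K / 12 * (∑ j, |l i j|) ^ 4 := by
  obtain ⟨n, rfl⟩ := Nat.exists_eq_add_one_of_ne_zero i.pos.ne'
  have hΨc : Continuous Ψ := by simpa using (hΨ 0 (by norm_num)).continuous
  have hint : ∀ (ρ : Measure (ι i → ℝ)) [IsProbabilityMeasure ρ], (∀ᵐ v ∂ρ, ‖v‖ ≤ 1) →
      Integrable (fun x => Ψ ((∑ i, ∑ j, l i j * x i j) - θ)) (Measure.pi (update m i ρ)) := by
    refine fun ρ _ hρ => (by fun_prop : Continuous _).integrable_of_ae_norm_le
      (ae_norm_le_pi zero_le_one fun j => ?_)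
    rcases eq_or_ne j i with rfl | hj
    · rwa [update_self]
    · rw [update_of_ne hj]
      exact hm j
  refine abs_integral_pi_update_sub_le m i μ ν (hint μ hμ) (hint ν hν) fun y => ?_
  have hsplit : ∀ v, ∑ i', ∑ j, l i' j * i.insertNth (α := fun i => ι i → ℝ) v y i' j - θ =
      (∑ i', ∑ j, l (i.succAbove i') j * y i' j - θ) + ∑ j, l i j * v j := fun v => by
    rw [Fin.sum_univ_succAbove _ i]
    simp only [Fin.insertNth_apply_same, Fin.insertNth_apply_succAbove]
    ring
  simp only [hsplit]
  exact abs_integral_comp_add_sum_mul_sub_le hμ hν hmom (l i) hΨ hK _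

theorem abs_sub_le_sum_of_abs_update_sub_le {R : ℕ} {β : Fin R → Type*}
    (F : (∀ i, β i) → ℝ) (P : ∀ i, β i → Prop) {a b : ∀ i, β i} (ha : ∀ i, P i (a i))
    (hb : ∀ i, P i (b i)) (C : Fin R → ℝ)
    (hC : ∀ i x, (∀ j, P j (x j)) → |F (update x i (a i)) - F (update x i (b i))| ≤ C i) :
    |F a - F b| ≤ ∑ i, C i := by
  let x : ℕ → ∀ i, β i := fun t i => if (i : ℕ) < t then b i else a i
  have hx : ∀ t j, P j (x t j) := fun t j => by
    dsimp only [x]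
    split_ifs
    exacts [hb j, ha j]
  have hx₀ : x 0 = a := funext fun j => if_neg (Nat.not_lt_zero _)
  have hxR : x R = b := funext fun j => if_pos j.isLt
  have hstep : ∀ i : Fin R, update (x i) i (a i) = x i ∧ update (x i) i (b i) = x (i + 1) := by
    refine fun i => ⟨update_eq_self_iff.2 (if_neg (lt_irrefl _)).symm, update_eq_iff.2 ⟨?_, ?_⟩⟩
    · exact (if_pos (Nat.lt_succ_self _)).symm
    · intro j hj
      have hj' : (j : ℕ) ≠ i := Fin.val_ne_of_ne hj
      simp only [x, show (j : ℕ) < i ↔ (j : ℕ) < i + 1 by omega]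
  calc |F a - F b| = |∑ i : Fin R, (F (x i) - F (x (i + 1)))| := by
        rw [Fin.sum_univ_eq_sum_range (fun t => F (x t) - F (x (t + 1))), sum_range_sub',
          hx₀, hxR]
    _ ≤ ∑ i : Fin R, |F (x i) - F (x (i + 1))| := abs_sum_le_sum_abs _ _
    _ ≤ ∑ i, C i := sum_le_sum fun i _ => by
        rw [← (hstep i).1, ← (hstep i).2]
        exact hC i _ (hx i)

theorem stmt_4 (R : ℕ) (k : Fin R → ℕ) (K : ℝ)
    (νA νB : ∀ i : Fin R, Measure (Fin (k i) → ℝ))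
    [∀ i, IsProbabilityMeasure (νA i)] [∀ i, IsProbabilityMeasure (νB i)]
    (hAbd : ∀ i, νA i {v | ∀ j, |v j| ≤ 1} = 1)
    (hBbd : ∀ i, νB i {v | ∀ j, |v j| ≤ 1} = 1)
    (hmom : ∀ i : Fin R, ∀ S : Multiset (Fin (k i)), Multiset.card S ≤ 3 →
      ∫ v, (S.map v).prod ∂(νA i) = ∫ v, (S.map v).prod ∂(νB i))
    (l : ∀ i : Fin R, Fin (k i) → ℝ)
    (Ψ : ℝ → ℝ)
    (hdiff : ∀ m : ℕ, m < 4 → Differentiable ℝ (iteratedDeriv m Ψ))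
    (hK : ∀ t : ℝ, |iteratedDeriv 4 Ψ t| ≤ K)
    (θ : ℝ) :
    |(∫ x, Ψ ((∑ i, ∑ j, l i j * x i j) - θ) ∂(Measure.pi νA)) -
        ∫ x, Ψ ((∑ i, ∑ j, l i j * x i j) - θ) ∂(Measure.pi νB)|
      ≤ K * ∑ i, (∑ j, |l i j|) ^ 4 := by
  have hK0 : 0 ≤ K := (abs_nonneg _).trans (hK 0)
  have hA := fun i => ae_norm_le_one_of_measure_cube_eq_one (hAbd i)
  have hB := fun i => ae_norm_le_one_of_measure_cube_eq_one (hBbd i)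
  calc _ ≤ ∑ i, K / 12 * (∑ j, |l i j|) ^ 4 :=
        abs_sub_le_sum_of_abs_update_sub_le
          (fun m : ∀ i, Measure (Fin (k i) → ℝ) =>
            ∫ x, Ψ ((∑ i, ∑ j, l i j * x i j) - θ) ∂Measure.pi m)
          (fun _ μ => IsProbabilityMeasure μ ∧ ∀ᵐ v ∂μ, ‖v‖ ≤ 1)
          (fun i => ⟨inferInstance, hA i⟩) (fun i => ⟨inferInstance, hB i⟩) _ fun i m hm => by
            have := fun j => (hm j).1
            exact abs_integral_pi_update_sub_le_of_moments m (fun j => (hm j).2) i (hA i) (hB i)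
              (hmom i) l hdiff hK θ
    _ ≤ K * ∑ i, (∑ j, |l i j|) ^ 4 := by
        rw [← mul_sum]
        gcongr
        linarith
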